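/- arXiv:2306.01867 — 2 statements merged into one kernel-verified Lean document; each statement's English description precedes it below -/
import Mathlib

section
/- Dual feasibility lower-bounds the cost of any tree on at least k vertices: Let V be a finite set, G a simple graph on V, c a nonnegative cost function on the edges of G, and k a natural number. Suppose y assigns a nonnegative real to each nonempty subset S ⊆ V and λ₁, λ₂ ≥ 0 are reals such that: (i) for every edge e of G, the sum of y_S over all S with e ∈ δ(S) is at most c_e; and (ii) for every S ⊆ V, the sum of y_T over nonempty T ⊊ S plus λ₂ is at least λ₁|S|. Then for every subtree T of G whose vertex set S_T satisfies |S_T| ≥ k, we have λ₁·k − λ₂ ≤ ∑_{e ∈ T} c_e. -/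
/-!
The cut constraints charge every set crossed by a tree edge to that edge, so the tree costs at
least the total `y`-weight of the sets crossed by its edges. Since the tree is connected, every
nonempty proper subset of its vertex set `A` is crossed by one of its edges; hence the tree costs
at least `∑_{∅ ≠ S ⊊ A} y_S ≥ λ₁ |A| - λ₂ ≥ λ₁ k - λ₂`.
-/

open scoped Classical

/-- An edge `e` crosses the cut `δ(S)`: it has exactly one endpoint in `S`. -/
def Crosses {V : Type*} (e : Sym2 V) (S : Finset V) : Prop :=
  ∃ u v, e = s(u, v) ∧ u ∈ S ∧ v ∉ S

open Finset

lemma Crosses.nonempty {V : Type*} {e : Sym2 V} {S : Finset V} (h : Crosses e S) :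
    S.Nonempty := by
  obtain ⟨u, -, -, hu, -⟩ := h
  exact ⟨u, hu⟩

lemma Finset.sum_le_sum_sum_filter_of_forall_exists {α β : Type*} {s : Finset α} {t : Finset β}
    {r : α → β → Prop} [DecidableRel r] {f : α → ℝ} (hf : ∀ a ∈ s, 0 ≤ f a)
    (h : ∀ a ∈ s, ∃ b ∈ t, r a b) :
    ∑ a ∈ s, f a ≤ ∑ b ∈ t, ∑ a ∈ s with r a b, f a :=
  calc ∑ a ∈ s, f a ≤ ∑ a ∈ s, ∑ b ∈ t with r a b, f a := by
        refine sum_le_sum fun a ha => ?_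
        obtain ⟨b, hb, hab⟩ := h a ha
        exact single_le_sum (fun _ _ => hf a ha) (mem_filter.2 ⟨hb, hab⟩)
    _ = ∑ b ∈ t, ∑ a ∈ s with r a b, f a :=
        sum_comm' fun a b => by simp only [mem_filter]; tauto

namespace SimpleGraph.Subgraph

variable {V : Type*} {G : SimpleGraph V} {T : G.Subgraph} {S : Finset V}

lemma exists_edge_crosses_of_walk {a b : T.verts} (p : T.coe.Walk a b) (ha : (a : V) ∈ S)
    (hb : (b : V) ∉ S) : ∃ e ∈ T.edgeSet, Crosses e S := by
  induction p with
  | nil => exact absurd ha hb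
  | @cons u v w huv _ ih =>
    by_cases hv : (v : V) ∈ S
    · exact ih hv hb
    · exact ⟨s(u, v), T.mem_edgeSet.2 huv, u, v, rfl, ha, hv⟩

lemma exists_edge_crosses_of_preconnected (hT : T.coe.Preconnected) (hS : S.Nonempty)
    (hST : (S : Set V) ⊂ T.verts) : ∃ e ∈ T.edgeSet, Crosses e S := by
  obtain ⟨u, hu⟩ := hS
  obtain ⟨v, hvT, hvS⟩ := Set.exists_of_ssubset hST
  obtain ⟨p⟩ := hT ⟨u, hST.subset hu⟩ ⟨v, hvT⟩
  exact exists_edge_crosses_of_walk p hu hvS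

end SimpleGraph.Subgraph

theorem dual_feasible_lower_bound_general
    {V : Type*} [Fintype V] [DecidableEq V]
    (G : SimpleGraph V) (c : Sym2 V → ℝ) (k : ℕ)
    (y : Finset V → ℝ) (lam₁ lam₂ : ℝ)
    (hy : ∀ S : Finset V, S.Nonempty → 0 ≤ y S)
    (hlam₁ : 0 ≤ lam₁)
    (hdual1 : ∀ e ∈ G.edgeSet,
      (∑ S ∈ Finset.univ.filter (fun S : Finset V => Crosses e S), y S) ≤ c e)
    (hdual2 : ∀ S : Finset V,
      lam₁ * S.card ≤ (∑ T ∈ Finset.univ.filter (fun T : Finset V => T.Nonempty ∧ T ⊂ S), y T) + lam₂)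
    (T : G.Subgraph) (htree : T.coe.IsTree)
    (hk : k ≤ T.verts.toFinset.card) :
    lam₁ * k - lam₂ ≤ ∑ e ∈ T.edgeSet.toFinset, c e := by
  set A := T.verts.toFinset
  set E := T.edgeSet.toFinset
  have hcut : ∀ S ∈ univ.filter (fun S : Finset V => S.Nonempty ∧ S ⊂ A),
      ∃ e ∈ E, Crosses e S := by
    intro S hS
    obtain ⟨hSne, hSA⟩ := (mem_filter.1 hS).2
    obtain ⟨e, he, hcross⟩ := T.exists_edge_crosses_of_preconnected
      htree.connected.preconnected hSne (Set.ssubset_toFinset.1 hSA)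
    exact ⟨e, Set.mem_toFinset.2 he, hcross⟩
  calc lam₁ * k - lam₂ ≤ lam₁ * A.card - lam₂ := by gcongr
    _ ≤ ∑ S ∈ univ.filter (fun S : Finset V => S.Nonempty ∧ S ⊂ A), y S := by
        linarith [hdual2 A]
    _ ≤ ∑ e ∈ E, ∑ S ∈ univ.filter (fun S : Finset V => S.Nonempty ∧ S ⊂ A) with Crosses e S,
          y S :=
        sum_le_sum_sum_filter_of_forall_exists (fun S hS => hy S (mem_filter.1 hS).2.1) hcut
    _ ≤ ∑ e ∈ E, ∑ S ∈ univ.filter (fun S : Finset V => Crosses e S), y S := by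
        refine sum_le_sum fun e _ => sum_le_sum_of_subset_of_nonneg ?_ fun S hS _ => ?_
        · exact filter_subset_filter _ (filter_subset _ _)
        · exact hy S (mem_filter.1 hS).2.nonempty
    _ ≤ ∑ e ∈ E, c e :=
        sum_le_sum fun e he => hdual1 e (T.edgeSet_subset (Set.mem_toFinset.1 he))

/-- Dual feasibility lower-bounds the cost of any tree on at least `k` vertices. -/
theorem dual_feasible_lower_bound
    {V : Type*} [Fintype V] [DecidableEq V]
    (G : SimpleGraph V) (c : Sym2 V → ℝ) (k : ℕ)
    (hc : ∀ e ∈ G.edgeSet, 0 ≤ c e)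
    (y : Finset V → ℝ) (lam₁ lam₂ : ℝ)
    (hy : ∀ S : Finset V, S.Nonempty → 0 ≤ y S)
    (hlam₁ : 0 ≤ lam₁) (hlam₂ : 0 ≤ lam₂)
    (hdual1 : ∀ e ∈ G.edgeSet,
      (∑ S ∈ Finset.univ.filter (fun S : Finset V => Crosses e S), y S) ≤ c e)
    (hdual2 : ∀ S : Finset V,
      lam₁ * S.card ≤ (∑ T ∈ Finset.univ.filter (fun T : Finset V => T.Nonempty ∧ T ⊂ S), y T) + lam₂)
    (T : G.Subgraph) (htree : T.coe.IsTree)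
    (hk : k ≤ T.verts.toFinset.card) :
    lam₁ * k - lam₂ ≤ ∑ e ∈ T.edgeSet.toFinset, c e :=
  dual_feasible_lower_bound_general G c k y lam₁ lam₂ hy hlam₁ hdual1 hdual2 T htree hk
end

section
/- Upper bound on the picked tree (Theorem 2 of the paper): Let V be a finite set, G a simple graph on V, c a nonnegative cost function on the edges of G, λ₁ ≥ 0, and y an assignment of a nonnegative real to each nonempty subset of V. Let T₀ be a subtree of G with vertex set S₀, |S₀| = k, and distinguished vertex v ∈ S₀, and let S₂ ⊆ V with S₀ ⊆ S₂. Assume: (i) every edge e ∈ T₀ is tight, i.e. ∑_{S : e ∈ δ(S)} y_S = c_e; (ii) ∑_{e ∈ T₀} ∑_{S : e ∈ δ(S)} y_S ≤ 2·∑_{U : U ∩ S₀ ≠ ∅, v ∉ U} y_U; (iii) S₂ \ S₀ is the disjoint union of pairwise disjoint neutral sets N′₁, …, N′_m, each disjoint from S₀, together with N_p \ S₀ for a neutral set N_p ⊊ S₂ with N_p disjoint from each N′_i; (iv) ∑_{nonempty U ⊆ N_p ∩ S₀} y_U ≤ λ₁|N_p ∩ S₀|; (v) y_U = 0 for every nonempty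 U ⊆ N_p with U ∩ S₀ ≠ ∅, U ∩ (N_p \ S₀) ≠ ∅, and v ∉ U; and (vi) y_U = 0 for every nonempty U with U ∩ S₀ ≠ ∅, v ∉ U, and U ⊄ S₂. Then ∑_{e ∈ T₀} c_e ≤ 2(λ₁·k − π(S₂)), where π(S₂) = λ₁|S₂| − ∑_{nonempty U ⊊ S₂} y_U. -/
/-!
Tightness turns the cost of `T₀` into its dual load, which by (ii) is at most twice the weight
of the sets that cut `S₀` but avoid `v`; by (vi) all of these are proper subsets of `S₂`. So it
suffices that the remaining nonempty proper subsets of `S₂` carry weight at least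
`λ₁ |S₂ \ S₀|`. The nonempty subsets of the neutral sets `N′ᵢ` carry `λ₁ |N′ᵢ|` exactly, and
those of `N_p` not inside `S₀` carry at least `λ₁ |N_p \ S₀|` by neutrality and (iv); by (v)
none of the latter cuts `S₀` while avoiding `v`. These families are pairwise disjoint, so
by nonnegativity of `y` their weights add up to at most the required weight.
-/

open scoped Classical

open Finset Function

theorem sum_sum_add_sum_le_sum_of_disjoint {α ι : Type*} [Fintype ι] [DecidableEq α]
    {F : ι → Finset α} {H G : Finset α} {f : α → ℝ}
    (hF : Pairwise (Disjoint on F)) (hFH : ∀ i, Disjoint (F i) H)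
    (hFG : ∀ i, F i ⊆ G) (hHG : H ⊆ G) (hf : ∀ x ∈ G, 0 ≤ f x) :
    ∑ i, ∑ x ∈ F i, f x + ∑ x ∈ H, f x ≤ ∑ x ∈ G, f x := by
  rw [← sum_biUnion (hF.set_pairwise _),
    ← sum_union ((disjoint_biUnion_left _ _ _).mpr fun i _ => hFH i)]
  exact sum_le_sum_of_subset_of_nonneg (union_subset (biUnion_subset.mpr fun i _ => hFG i) hHG)
    fun x hx _ => hf x hx

section

variable {V : Type*} [Fintype V] [DecidableEq V]

def nonemptySubsets (N : Finset V) : Finset (Finset V) :=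
  univ.filter fun U => U.Nonempty ∧ U ⊆ N

@[simp]
theorem mem_nonemptySubsets {N U : Finset V} : U ∈ nonemptySubsets N ↔ U.Nonempty ∧ U ⊆ N := by
  simp [nonemptySubsets]

theorem disjoint_nonemptySubsets {A B : Finset V} (h : Disjoint A B) :
    Disjoint (nonemptySubsets A) (nonemptySubsets B) := by
  refine disjoint_left.mpr fun U hA hB => ?_
  rw [mem_nonemptySubsets] at hA hB
  obtain ⟨x, hx⟩ := hA.1
  exact disjoint_left.mp h (hA.2 hx) (hB.2 hx)

theorem sum_nonemptySubsets_inter_add_sum_not_subset (y : Finset V → ℝ) (N S : Finset V) :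
    ∑ U ∈ nonemptySubsets (N ∩ S), y U + ∑ U ∈ (nonemptySubsets N).filter (¬ · ⊆ S), y U =
      ∑ U ∈ nonemptySubsets N, y U := by
  have : (nonemptySubsets N).filter (· ⊆ S) = nonemptySubsets (N ∩ S) := by
    ext U
    simp [subset_inter_iff, and_assoc]
  rw [← this, sum_filter_add_sum_filter_not]

theorem sum_not_subset_eq_sum_not_cut {y : Finset V → ℝ} {N S : Finset V} {v : V}
    (hvanish : ∀ U : Finset V, U.Nonempty → U ⊆ N → (U ∩ S).Nonempty →
      (U ∩ (N \ S)).Nonempty → v ∉ U → y U = 0) :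
    ∑ U ∈ ((nonemptySubsets N).filter (¬ · ⊆ S)).filter (fun U => ¬((U ∩ S).Nonempty ∧ v ∉ U)),
        y U =
      ∑ U ∈ (nonemptySubsets N).filter (¬ · ⊆ S), y U := by
  refine sum_filter_of_ne fun U hU hyU ⟨hUS, hvU⟩ => hyU ?_
  obtain ⟨⟨hne, hUN⟩, hnot⟩ := by simpa only [mem_filter, mem_nonemptySubsets] using hU
  obtain ⟨x, hxU, hxS⟩ := not_subset.mp hnot
  exact hvanish U hne hUN hUS ⟨x, mem_inter.mpr ⟨hxU, mem_sdiff.mpr ⟨hUN hxU, hxS⟩⟩⟩ hvU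

theorem mul_card_sdiff_le_sum_not_cut {lam : ℝ} {y : Finset V → ℝ} {N S : Finset V} {v : V}
    (hN : ∑ U ∈ nonemptySubsets N, y U = lam * #N)
    (hNS : ∑ U ∈ nonemptySubsets (N ∩ S), y U ≤ lam * #(N ∩ S))
    (hvanish : ∀ U : Finset V, U.Nonempty → U ⊆ N → (U ∩ S).Nonempty →
      (U ∩ (N \ S)).Nonempty → v ∉ U → y U = 0) :
    lam * #(N \ S) ≤
      ∑ U ∈ ((nonemptySubsets N).filter (¬ · ⊆ S)).filter (fun U => ¬((U ∩ S).Nonempty ∧ v ∉ U)),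
        y U := by
  have hcard : (#(N \ S) : ℝ) = #N - #(N ∩ S) := by
    rw [← card_sdiff_add_card_inter N S]
    push_cast
    ring
  rw [sum_not_subset_eq_sum_not_cut hvanish, hcard]
  linarith [sum_nonemptySubsets_inter_add_sum_not_subset y N S]

theorem sum_cut_eq_sum_ssubset_cut {y : Finset V → ℝ} {S₀ S₂ : Finset V} {v : V} (hv : v ∈ S₂)
    (hvanish : ∀ U : Finset V, U.Nonempty → (U ∩ S₀).Nonempty → v ∉ U → ¬ U ⊆ S₂ → y U = 0) :
    ∑ U ∈ univ.filter (fun U => (U ∩ S₀).Nonempty ∧ v ∉ U), y U =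
      ∑ U ∈ (univ.filter fun U => U.Nonempty ∧ U ⊂ S₂).filter
        (fun U => (U ∩ S₀).Nonempty ∧ v ∉ U), y U := by
  rw [filter_comm]
  refine (sum_filter_of_ne fun U hU hyU => ?_).symm
  obtain ⟨hcut, hvU⟩ := (mem_filter.mp hU).2
  have hUS₂ : U ⊆ S₂ := by
    by_contra h
    exact hyU (hvanish U (hcut.mono inter_subset_left) hcut hvU h)
  exact ⟨hcut.mono inter_subset_left, ssubset_of_subset_of_ne hUS₂ fun h => hvU (h ▸ hv)⟩

theorem mul_card_sdiff_le_sum_ssubset_not_cut {ι : Type*} [Fintype ι] {lam : ℝ}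
    {y : Finset V → ℝ} {S₀ S₂ Np : Finset V} {N' : ι → Finset V} {v : V}
    (hy : ∀ U : Finset V, U.Nonempty → 0 ≤ y U) (hv : v ∈ S₀) (hsub : S₀ ⊆ S₂)
    (hN'disj : Pairwise (Disjoint on N'))
    (hN'neutral : ∀ i, ∑ U ∈ nonemptySubsets (N' i), y U = lam * #(N' i))
    (hN'S₀ : ∀ i, Disjoint (N' i) S₀)
    (hNpneutral : ∑ U ∈ nonemptySubsets Np, y U = lam * #Np)
    (hNpS₂ : Np ⊂ S₂) (hNpN' : ∀ i, Disjoint Np (N' i))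
    (hdecomp : S₂ \ S₀ = univ.biUnion N' ∪ (Np \ S₀))
    (hNpS₀ : ∑ U ∈ nonemptySubsets (Np ∩ S₀), y U ≤ lam * #(Np ∩ S₀))
    (hvanish : ∀ U : Finset V, U.Nonempty → U ⊆ Np → (U ∩ S₀).Nonempty →
      (U ∩ (Np \ S₀)).Nonempty → v ∉ U → y U = 0) :
    lam * #(S₂ \ S₀) ≤
      ∑ U ∈ (univ.filter fun U => U.Nonempty ∧ U ⊂ S₂).filter
        (fun U => ¬((U ∩ S₀).Nonempty ∧ v ∉ U)), y U := by
  set good := (univ.filter fun U : Finset V => U.Nonempty ∧ U ⊂ S₂).filter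
    fun U => ¬((U ∩ S₀).Nonempty ∧ v ∉ U)
  set goodNp := ((nonemptySubsets Np).filter (¬ · ⊆ S₀)).filter
    fun U => ¬((U ∩ S₀).Nonempty ∧ v ∉ U)
  have hcard : (#(S₂ \ S₀) : ℝ) = ∑ i, (#(N' i) : ℝ) + #(Np \ S₀) := by
    rw [hdecomp, card_union_of_disjoint ((disjoint_biUnion_left _ _ _).mpr fun i _ =>
        (hNpN' i).symm.mono_right sdiff_subset),
      card_biUnion fun i _ j _ hij => hN'disj hij]
    push_cast
    rfl
  have hN'good : ∀ i, nonemptySubsets (N' i) ⊆ good := by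
    intro i U hU
    rw [mem_nonemptySubsets] at hU
    have hN'sub : N' i ⊆ S₂ \ S₀ :=
      hdecomp ▸ subset_union_left.trans' (subset_biUnion_of_mem N' (mem_univ i))
    simp only [good, mem_filter, mem_univ, true_and]
    refine ⟨⟨hU.1, (hU.2.trans hN'sub).trans_ssubset (sdiff_ssubset hsub ⟨v, hv⟩)⟩, ?_⟩
    rintro ⟨⟨x, hx⟩, -⟩
    rw [mem_inter] at hx
    exact disjoint_left.mp (hN'S₀ i) (hU.2 hx.1) hx.2
  have hNpgood : goodNp ⊆ good := by
    intro U hU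
    simp only [good, goodNp, mem_filter, mem_nonemptySubsets, mem_univ, true_and] at hU ⊢
    exact ⟨⟨hU.1.1.1, hU.1.1.2.trans_ssubset hNpS₂⟩, hU.2⟩
  have hNpsub : goodNp ⊆ nonemptySubsets Np := (filter_subset _ _).trans (filter_subset _ _)
  calc lam * #(S₂ \ S₀) = ∑ i, ∑ U ∈ nonemptySubsets (N' i), y U + lam * #(Np \ S₀) := by
        rw [hcard, mul_add, mul_sum]
        simp only [hN'neutral]
    _ ≤ ∑ i, ∑ U ∈ nonemptySubsets (N' i), y U + ∑ U ∈ goodNp, y U := by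
        gcongr
        exact mul_card_sdiff_le_sum_not_cut hNpneutral hNpS₀ hvanish
    _ ≤ ∑ U ∈ good, y U :=
        sum_sum_add_sum_le_sum_of_disjoint
          (fun i j hij => disjoint_nonemptySubsets (hN'disj hij))
          (fun i => (disjoint_nonemptySubsets (hNpN' i)).symm.mono_right hNpsub) hN'good hNpgood
          fun U hU => hy U (mem_filter.mp (mem_filter.mp hU).1).2.1

end

theorem picked_tree_upper_bound_general
    {V : Type*} [Fintype V] [DecidableEq V]
    (G : SimpleGraph V) (c : Sym2 V → ℝ) (k m : ℕ)
    (lam₁ : ℝ)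
    (y : Finset V → ℝ)
    (hy : ∀ U : Finset V, U.Nonempty → 0 ≤ y U)
    (T₀ : G.Subgraph)
    (S₀ S₂ : Finset V) (v : V)
    (hcard : S₀.card = k)
    (hv : v ∈ S₀) (hsub : S₀ ⊆ S₂)
    -- (i) every edge of T₀ is tight
    (htight : ∀ e ∈ T₀.edgeSet,
      (∑ S ∈ Finset.univ.filter (fun S : Finset V => Crosses e S), y S) = c e)
    -- (ii) bound on the total dual load of the tree
    (hload : (∑ e ∈ T₀.edgeSet.toFinset,
        ∑ S ∈ Finset.univ.filter (fun S : Finset V => Crosses e S), y S) ≤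
      2 * ∑ U ∈ Finset.univ.filter
        (fun U : Finset V => (U ∩ S₀).Nonempty ∧ v ∉ U), y U)
    -- (iii) decomposition of S₂ \ S₀ into neutral sets N′₁, …, N′_m and N_p \ S₀
    (N' : Fin m → Finset V) (Np : Finset V)
    (hN'disj : ∀ i j, i ≠ j → Disjoint (N' i) (N' j))
    (hN'neutral : ∀ i,
      (∑ U ∈ Finset.univ.filter (fun U : Finset V => U.Nonempty ∧ U ⊆ N' i), y U) =
        lam₁ * (N' i).card)
    (hN'S₀ : ∀ i, Disjoint (N' i) S₀)
    (hNpneutral :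
      (∑ U ∈ Finset.univ.filter (fun U : Finset V => U.Nonempty ∧ U ⊆ Np), y U) =
        lam₁ * Np.card)
    (hNpS₂ : Np ⊂ S₂)
    (hNpN' : ∀ i, Disjoint Np (N' i))
    (hdecomp : S₂ \ S₀ = (Finset.univ.biUnion fun i => N' i) ∪ (Np \ S₀))
    -- (iv)
    (hNpS₀ :
      (∑ U ∈ Finset.univ.filter (fun U : Finset V => U.Nonempty ∧ U ⊆ Np ∩ S₀), y U) ≤
        lam₁ * (Np ∩ S₀).card)
    -- (v)
    (hv5 : ∀ U : Finset V, U.Nonempty → U ⊆ Np → (U ∩ S₀).Nonempty →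
      (U ∩ (Np \ S₀)).Nonempty → v ∉ U → y U = 0)
    -- (vi)
    (hv6 : ∀ U : Finset V, U.Nonempty → (U ∩ S₀).Nonempty → v ∉ U → ¬ U ⊆ S₂ → y U = 0) :
    (∑ e ∈ T₀.edgeSet.toFinset, c e) ≤
      2 * (lam₁ * k -
        (lam₁ * S₂.card -
          ∑ U ∈ Finset.univ.filter (fun U : Finset V => U.Nonempty ∧ U ⊂ S₂), y U)) := by
  have hcost : ∑ e ∈ T₀.edgeSet.toFinset, c e ≤
      2 * ∑ U ∈ univ.filter (fun U : Finset V => (U ∩ S₀).Nonempty ∧ v ∉ U), y U :=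
    (sum_congr rfl fun e he => (htight e (Set.mem_toFinset.mp he)).symm).trans_le hload
  have hcut := sum_cut_eq_sum_ssubset_cut (hsub hv) hv6
  have hrest := mul_card_sdiff_le_sum_ssubset_not_cut hy hv hsub hN'disj hN'neutral hN'S₀
    hNpneutral hNpS₂ hNpN' hdecomp hNpS₀ hv5
  have hsplit := sum_filter_add_sum_filter_not (univ.filter fun U : Finset V => U.Nonempty ∧ U ⊂ S₂)
    (fun U => (U ∩ S₀).Nonempty ∧ v ∉ U) y
  rw [cast_card_sdiff hsub, hcard] at hrest
  linarith

/-- Upper bound on the picked tree (Theorem 2 of the paper):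
`∑_{e ∈ T₀} c_e ≤ 2(λ₁·k − π(S₂))` where `π(S₂) = λ₁|S₂| − ∑_{∅ ≠ U ⊊ S₂} y_U`. -/
theorem picked_tree_upper_bound
    {V : Type*} [Fintype V] [DecidableEq V]
    (G : SimpleGraph V) (c : Sym2 V → ℝ) (k m : ℕ)
    (hc : ∀ e ∈ G.edgeSet, 0 ≤ c e)
    (lam₁ : ℝ) (hlam₁ : 0 ≤ lam₁)
    (y : Finset V → ℝ)
    (hy : ∀ U : Finset V, U.Nonempty → 0 ≤ y U)
    (T₀ : G.Subgraph) (htree : T₀.coe.IsTree)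
    (S₀ S₂ : Finset V) (v : V)
    (hverts : T₀.verts = ↑S₀) (hcard : S₀.card = k)
    (hv : v ∈ S₀) (hsub : S₀ ⊆ S₂)
    -- (i) every edge of T₀ is tight
    (htight : ∀ e ∈ T₀.edgeSet,
      (∑ S ∈ Finset.univ.filter (fun S : Finset V => Crosses e S), y S) = c e)
    -- (ii) bound on the total dual load of the tree
    (hload : (∑ e ∈ T₀.edgeSet.toFinset,
        ∑ S ∈ Finset.univ.filter (fun S : Finset V => Crosses e S), y S) ≤
      2 * ∑ U ∈ Finset.univ.filter
        (fun U : Finset V => (U ∩ S₀).Nonempty ∧ v ∉ U), y U)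
    -- (iii) decomposition of S₂ \ S₀ into neutral sets N′₁, …, N′_m and N_p \ S₀
    (N' : Fin m → Finset V) (Np : Finset V)
    (hN'disj : ∀ i j, i ≠ j → Disjoint (N' i) (N' j))
    (hN'neutral : ∀ i,
      (∑ U ∈ Finset.univ.filter (fun U : Finset V => U.Nonempty ∧ U ⊆ N' i), y U) =
        lam₁ * (N' i).card)
    (hN'S₀ : ∀ i, Disjoint (N' i) S₀)
    (hNpneutral :
      (∑ U ∈ Finset.univ.filter (fun U : Finset V => U.Nonempty ∧ U ⊆ Np), y U) =
        lam₁ * Np.card)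
    (hNpS₂ : Np ⊂ S₂)
    (hNpN' : ∀ i, Disjoint Np (N' i))
    (hdecomp : S₂ \ S₀ = (Finset.univ.biUnion fun i => N' i) ∪ (Np \ S₀))
    -- (iv)
    (hNpS₀ :
      (∑ U ∈ Finset.univ.filter (fun U : Finset V => U.Nonempty ∧ U ⊆ Np ∩ S₀), y U) ≤
        lam₁ * (Np ∩ S₀).card)
    -- (v)
    (hv5 : ∀ U : Finset V, U.Nonempty → U ⊆ Np → (U ∩ S₀).Nonempty →
      (U ∩ (Np \ S₀)).Nonempty → v ∉ U → y U = 0)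
    -- (vi)
    (hv6 : ∀ U : Finset V, U.Nonempty → (U ∩ S₀).Nonempty → v ∉ U → ¬ U ⊆ S₂ → y U = 0) :
    (∑ e ∈ T₀.edgeSet.toFinset, c e) ≤
      2 * (lam₁ * k -
        (lam₁ * S₂.card -
          ∑ U ∈ Finset.univ.filter (fun U : Finset V => U.Nonempty ∧ U ⊂ S₂), y U)) :=
  picked_tree_upper_bound_general G c k m lam₁ y hy T₀ S₀ S₂ v hcard hv hsub htight hload N' Np
    hN'disj hN'neutral hN'S₀ hNpneutral hNpS₂ hNpN' hdecomp hNpS₀ hv5 hv6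
end
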